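/- For every q ∈ (0,1] and every integer n ≥ 1, one has [n/2]_q ≥ n/(q^{1/2} + q^{−1/2}). -/

import Mathlib

/-!
With `u = q^{1/2}` one has `[n/2]_q = [n]_u / [2]_u` and `[2]_u = u + u⁻¹`, so the claim is
`n ≤ [n]_u`. Now `u^{n-1} [n]_u = ∑_{i<n} u^{2i}`, and pairing the terms `i` and `n-1-i` of this
sum, AM-GM gives `u^{2i} + u^{2(n-1-i)} ≥ 2 u^{n-1}`.
-/

open Finset

/-- The `q`-number `[a]_q = (q^a - q^{-a})/(q - q⁻¹)` for `q ≠ 1`, and `a` for `q = 1`. -/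
noncomputable def qNum (q a : ℝ) : ℝ :=
  if q = 1 then a else (q ^ a - q ^ (-a)) / (q - q⁻¹)

lemma natCast_mul_pow_le_sum_pow_two_mul {R : Type*} [CommRing R] [LinearOrder R]
    [IsStrictOrderedRing R] (x : R) (n : ℕ) :
    (n : R) * x ^ (n - 1) ≤ ∑ i ∈ range n, x ^ (2 * i) := by
  have hpair : ∀ i ∈ range n, 2 * x ^ (n - 1) ≤ x ^ (2 * i) + x ^ (2 * (n - 1 - i)) := by
    intro i hi
    have hexp : x ^ (n - 1) = x ^ i * x ^ (n - 1 - i) := by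
      rw [← pow_add]
      congr 1
      have := mem_range.1 hi
      omega
    rw [hexp, pow_mul', pow_mul']
    nlinarith [sq_nonneg (x ^ i - x ^ (n - 1 - i))]
  have hsum := sum_le_sum hpair
  rw [sum_add_distrib, sum_range_reflect (fun i => x ^ (2 * i)) n, sum_const, card_range,
    nsmul_eq_mul] at hsum
  linarith

lemma sub_inv_ne_zero_of_ne_one {u : ℝ} (hu : 0 < u) (h1 : u ≠ 1) : u - u⁻¹ ≠ 0 := by
  rw [sub_ne_zero]
  intro h
  have : u * u = 1 := by rw [← mul_inv_cancel₀ hu.ne', ← h]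
  rcases mul_self_eq_one_iff.1 this with h' | h' <;> [exact h1 h'; linarith]

lemma qNum_natCast_mul_pow_eq_sum {u : ℝ} (hu : 0 < u) (n : ℕ) :
    qNum u n * u ^ (n - 1) = ∑ i ∈ range n, u ^ (2 * i) := by
  by_cases h1 : u = 1
  · simp [qNum, h1]
  rcases n with _ | m
  · simp [qNum]
  have hu2 : u ^ 2 ≠ 1 := by
    rwa [Ne, pow_eq_one_iff_of_nonneg hu.le two_ne_zero]
  simp only [pow_mul, geom_sum_eq hu2, qNum, if_neg h1, Real.rpow_neg hu.le, Real.rpow_natCast,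
    Nat.add_sub_cancel]
  rw [div_mul_eq_mul_div, div_eq_div_iff (sub_inv_ne_zero_of_ne_one hu h1) (sub_ne_zero.2 hu2)]
  field_simp
  ring

lemma natCast_le_qNum {u : ℝ} (hu : 0 < u) (n : ℕ) : (n : ℝ) ≤ qNum u n := by
  have h := natCast_mul_pow_le_sum_pow_two_mul u n
  rw [← qNum_natCast_mul_pow_eq_sum hu] at h
  exact le_of_mul_le_mul_right h (pow_pos hu _)

lemma qNum_two {u : ℝ} (hu : 0 < u) : qNum u 2 = u + u⁻¹ := by
  unfold qNum
  split_ifs with h1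
  · norm_num [h1]
  rw [Real.rpow_neg hu.le, Real.rpow_two, div_eq_iff (sub_inv_ne_zero_of_ne_one hu h1)]
  ring

lemma qNum_div_two {q : ℝ} (hq : 0 < q) (a : ℝ) :
    qNum q (a / 2) = qNum (q ^ (1 / 2 : ℝ)) a / qNum (q ^ (1 / 2 : ℝ)) 2 := by
  set u := q ^ (1 / 2 : ℝ) with hu_def
  have hu : 0 < u := Real.rpow_pos_of_pos hq _
  have hq_eq : q = u ^ (2 : ℝ) := by
    rw [hu_def, ← Real.rpow_mul hq.le]
    norm_num
  have h1 : q = 1 ↔ u = 1 := by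
    rw [hq_eq, Real.rpow_two, pow_eq_one_iff_of_nonneg hu.le two_ne_zero]
  rw [qNum_two hu]
  unfold qNum
  by_cases hu1 : u = 1
  · simp only [hu1, h1.2 hu1, if_true]
    norm_num
  rw [if_neg (mt h1.1 hu1), if_neg hu1, hq_eq, ← Real.rpow_mul hu.le, ← Real.rpow_mul hu.le,
    mul_div_cancel₀ a two_ne_zero, mul_neg, mul_div_cancel₀ a two_ne_zero, Real.rpow_two, div_div]
  congr 1
  ring

theorem statement13_general (q : ℝ) (hq0 : 0 < q) (n : ℕ) :
    (n : ℝ) / (q ^ ((1 : ℝ) / 2) + q ^ (-(1 : ℝ) / 2)) ≤ qNum q ((n : ℝ) / 2) := by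
  have hu : 0 < q ^ ((1 : ℝ) / 2) := Real.rpow_pos_of_pos hq0 _
  rw [qNum_div_two hq0, qNum_two hu, neg_div, Real.rpow_neg hq0.le]
  exact div_le_div_of_nonneg_right (natCast_le_qNum hu n) (by positivity)

/-- For every `q ∈ (0,1]` and every integer `n ≥ 1`, one has
`[n/2]_q ≥ n/(q^{1/2} + q^{−1/2})`. -/
theorem statement13 (q : ℝ) (hq0 : 0 < q) (hq1 : q ≤ 1) (n : ℕ) (hn : 1 ≤ n) :
    (n : ℝ) / (q ^ ((1 : ℝ) / 2) + q ^ (-(1 : ℝ) / 2)) ≤ qNum q ((n : ℝ) / 2) :=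
  statement13_general q hq0 n
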